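/- arXiv:2412.05468 — 2 statements merged into one kernel-verified Lean document; each statement's English description precedes it below -/
import Mathlib

section
/- Let σ > 0 and consider the UPML stretching s(z) = 1 + σ/z. For the Lorentz material law M(z) = ε_ω + χ(z) with χ(z) = c/(e + fz + z²), c,e,f,ε_ω > 0, one has for z = ν + it: Re(z·s(z)·M(z)) = (ν + σ)(ε_ω + Re χ(z)) - t·Im χ(z). In particular, if ν ∈ (-min(σ, f/2), 0], ε_ω + Re χ(ν+it) > 0 for all t, and the denominator e + fz + z² is nonvanishing, then Re(z·s(z)·M(z)) > 0. -/
open Complex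

/-- UPML with Lorentz material law: with `s(z) = 1 + σ/z`, `M(z) = ε_ω + χ(z)`,
`χ(z) = c/(e + fz + z²)`, one has
`Re(z·s(z)·M(z)) = (ν+σ)(ε_ω + Re χ(z)) - t·Im χ(z)` for `z = ν + it ≠ 0`;
and if `-min(σ, f/2) < ν ≤ 0`, `ε_ω + Re χ(ν+it') > 0` for all `t'`, and the
denominator is nonvanishing, then `Re(z·s(z)·M(z)) > 0`. -/
theorem upml_lorentz_accretivity (σ c e f εω ν t : ℝ)
    (hσ : 0 < σ) (hc : 0 < c) (he : 0 < e) (hf : 0 < f) (hε : 0 < εω)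
    (hz : (ν : ℂ) + t * I ≠ 0)
    (hden : (e : ℂ) + f * ((ν : ℂ) + t * I) + ((ν : ℂ) + t * I) ^ 2 ≠ 0) :
    (((ν : ℂ) + t * I) * (1 + (σ : ℂ) / ((ν : ℂ) + t * I)) *
          ((εω : ℂ) + (c : ℂ) / ((e : ℂ) + f * ((ν : ℂ) + t * I) + ((ν : ℂ) + t * I) ^ 2))).re =
        (ν + σ) * (εω + ((c : ℂ) / ((e : ℂ) + f * ((ν : ℂ) + t * I) + ((ν : ℂ) + t * I) ^ 2)).re)
          - t * ((c : ℂ) / ((e : ℂ) + f * ((ν : ℂ) + t * I) + ((ν : ℂ) + t * I) ^ 2)).im ∧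
      (-min σ (f / 2) < ν → ν ≤ 0 →
        (∀ t' : ℝ, (e : ℂ) + f * ((ν : ℂ) + t' * I) + ((ν : ℂ) + t' * I) ^ 2 ≠ 0 →
          0 < εω + ((c : ℂ) / ((e : ℂ) + f * ((ν : ℂ) + t' * I) + ((ν : ℂ) + t' * I) ^ 2)).re) →
        0 < (((ν : ℂ) + t * I) * (1 + (σ : ℂ) / ((ν : ℂ) + t * I)) *
          ((εω : ℂ) + (c : ℂ) / ((e : ℂ) + f * ((ν : ℂ) + t * I) + ((ν : ℂ) + t * I) ^ 2))).re) := by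
  set z : ℂ := (ν : ℂ) + t * I with hzdef
  set D : ℂ := (e : ℂ) + f * z + z ^ 2 with hD
  have hzs : z * (1 + (σ : ℂ) / z) = z + σ := by
    field_simp
  have hzre : z.re = ν := by simp [hzdef]
  have hzim : z.im = t := by simp [hzdef]
  have hM : ((εω : ℂ) + (c : ℂ) / D).re = εω + ((c : ℂ) / D).re := by simp
  have hMi : ((εω : ℂ) + (c : ℂ) / D).im = ((c : ℂ) / D).im := by simp
  have key : (z * (1 + (σ : ℂ) / z) * ((εω : ℂ) + (c : ℂ) / D)).re =
      (ν + σ) * (εω + ((c : ℂ) / D).re) - t * ((c : ℂ) / D).im := by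
    rw [hzs, Complex.mul_re, hM, hMi]
    simp [hzre, hzim]
  refine ⟨key, fun hν hν0 hpos => ?_⟩
  rw [key]
  have hνσ : 0 < ν + σ := by
    have : -σ ≤ -min σ (f / 2) := by
      simp [min_le_left]
    linarith [lt_of_le_of_lt this hν]
  have h1 : 0 < (ν + σ) * (εω + ((c : ℂ) / D).re) :=
    mul_pos hνσ (hpos t hden)
  have hDim : D.im = t * (f + 2 * ν) := by
    simp [hD, hzdef, Complex.add_im, Complex.mul_im, sq]
    ring
  have hχim : ((c : ℂ) / D).im = -c * D.im / Complex.normSq D := by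
    rw [Complex.div_im]
    simp
    ring
  have hnsq : 0 < Complex.normSq D := Complex.normSq_pos.mpr hden
  have h2 : 0 ≤ - (t * ((c : ℂ) / D).im) := by
    rw [hχim, hDim]
    have hfν : 0 ≤ f + 2 * ν := by
      have : -(f / 2) ≤ -min σ (f / 2) := by simp [min_le_right]
      linarith [lt_of_le_of_lt this hν]
    have : 0 ≤ c * (t * t) * (f + 2 * ν) / Complex.normSq D :=
      div_nonneg (mul_nonneg (mul_nonneg hc.le (mul_self_nonneg t)) hfν) hnsq.le
    calc (0:ℝ) ≤ c * (t * t) * (f + 2 * ν) / Complex.normSq D := this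
      _ = -(t * (-c * (t * (f + 2 * ν)) / Complex.normSq D)) := by ring
  linarith
end

section
/- Let σ > 0, a > 0, b > 0, ε_ω > 0 and consider M_PML(z) = (z + σ)(ε_ω + a/(z+b)). Then for all z = ν + it with -min(σ, b) < ν, Re(z·(1 + σ/z)·(ε_ω + a/(z+b))) = (ν+σ)(ε_ω + a(ν+b)/(t²+(ν+b)²)) + a t²/(t²+(ν+b)²) ≥ 0; it is strictly positive if moreover ν > -min(σ, b) and (ν+σ)ε_ω > 0. -/
open Complex

/-- UPML with Debye material law: with `s(z) = 1 + σ/z` and `ε(z) = ε_ω + a/(z+b)`,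
for `z = ν + it ≠ 0` with `ν > -min(σ, b)`:
`Re(z·s(z)·ε(z)) = (ν+σ)(ε_ω + a(ν+b)/(t²+(ν+b)²)) + at²/(t²+(ν+b)²) ≥ 0`,
and strictly positive if moreover `(ν+σ)ε_ω > 0`. -/
theorem upml_debye_accretivity (σ a b εω ν t : ℝ)
    (hσ : 0 < σ) (ha : 0 < a) (hb : 0 < b) (hε : 0 < εω)
    (hν : -min σ b < ν) (hz : (ν : ℂ) + t * I ≠ 0) :
    (((ν : ℂ) + t * I) * (1 + (σ : ℂ) / ((ν : ℂ) + t * I)) *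
          ((εω : ℂ) + (a : ℂ) / (((ν : ℂ) + t * I) + b))).re =
        (ν + σ) * (εω + a * (ν + b) / (t ^ 2 + (ν + b) ^ 2))
          + a * t ^ 2 / (t ^ 2 + (ν + b) ^ 2) ∧
      0 ≤ (((ν : ℂ) + t * I) * (1 + (σ : ℂ) / ((ν : ℂ) + t * I)) *
          ((εω : ℂ) + (a : ℂ) / (((ν : ℂ) + t * I) + b))).re ∧
      (0 < (ν + σ) * εω →
        0 < (((ν : ℂ) + t * I) * (1 + (σ : ℂ) / ((ν : ℂ) + t * I)) *
          ((εω : ℂ) + (a : ℂ) / (((ν : ℂ) + t * I) + b))).re) := by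
  have hνσ : 0 < ν + σ := by
    have : -σ ≤ -min σ b := by simp [min_le_left σ b]
    linarith [lt_of_le_of_lt this hν]
  have hνb : 0 < ν + b := by
    have : -b ≤ -min σ b := by simp [min_le_right σ b]
    linarith [lt_of_le_of_lt this hν]
  have hD : 0 < t ^ 2 + (ν + b) ^ 2 := by positivity
  have hzb : ((ν : ℂ) + t * I) + b ≠ 0 := by
    intro h
    have := congrArg Complex.re h
    simp at this
    linarith
  have hmul : ((ν : ℂ) + t * I) * (1 + (σ : ℂ) / ((ν : ℂ) + t * I)) =
      ((ν : ℂ) + t * I) + σ := by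
    field_simp
  rw [hmul]
  have heq : ((((ν : ℂ) + t * I) + σ) *
      ((εω : ℂ) + (a : ℂ) / (((ν : ℂ) + t * I) + b))).re =
        (ν + σ) * (εω + a * (ν + b) / (t ^ 2 + (ν + b) ^ 2))
          + a * t ^ 2 / (t ^ 2 + (ν + b) ^ 2) := by
    rw [div_eq_mul_inv, Complex.inv_def]
    simp [Complex.normSq_apply, Complex.add_re, Complex.add_im, Complex.mul_re,
      Complex.mul_im, Complex.ofReal_re, Complex.ofReal_im]
    have hD' : (ν + b) * (ν + b) + t * t ≠ 0 := by nlinarith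
    field_simp
    ring
  refine ⟨heq, ?_, ?_⟩
  · rw [heq]; positivity
  · intro hpos; rw [heq]; positivity
end
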